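/- arXiv:2307.12942 — 10 statements merged into one kernel-verified Lean document; each statement's English description precedes it below -/
import Mathlib

section
/- Let R be a Bézout domain. Then every finitely generated R-submodule of a finitely generated free R-module is itself a free R-module. -/
/-!
Induct on the rank of the ambient free module `ι → R`. Projecting a finite submodule `N` onto
one coordinate gives a finitely generated ideal, which is principal, hence free and in particular
projective; so `N` splits as the kernel times the image. The kernel is finite as a direct summand
of `N` and embeds into the free module of smaller rank, so it is free by induction.
-/

open LinearMap

theorem Submodule.IsPrincipal.free {R M : Type*} [Ring R] [IsDomain R] [AddCommGroup M]
    [Module R M] [Module.IsTorsionFree R M] {N : Submodule R M} (hN : N.IsPrincipal) :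
    Module.Free R N := by
  obtain ⟨x, rfl⟩ := hN
  rcases eq_or_ne x 0 with rfl | hx
  · rw [Submodule.span_zero_singleton]
    infer_instance
  · exact .of_equiv (LinearEquiv.toSpanNonzeroSingleton R M x hx)

section Splitting

variable {R M P : Type*} [Ring R] [AddCommGroup M] [Module R M] [AddCommGroup P] [Module R P]

theorem LinearMap.nonempty_equiv_ker_prod_range (f : M →ₗ[R] P)
    [Module.Projective R (range f)] : Nonempty (M ≃ₗ[R] ker f × range f) := by
  obtain ⟨s, hs⟩ := Module.projective_lifting_property f.rangeRestrict LinearMap.id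
    f.surjective_rangeRestrict
  rw [← ker_rangeRestrict]
  exact ⟨(f.rangeRestrict.exact_subtype_ker_map.splitSurjectiveEquiv
    (ker f.rangeRestrict).injective_subtype ⟨s, hs⟩).1⟩

theorem LinearMap.finite_ker_of_projective_range [Module.Finite R M] (f : M →ₗ[R] P)
    [Module.Projective R (range f)] : Module.Finite R (ker f) :=
  let ⟨e⟩ := f.nonempty_equiv_ker_prod_range
  .of_surjective (fst R _ _ ∘ₗ e.toLinearMap) (Prod.fst_surjective.comp e.surjective)

theorem LinearMap.free_of_free_ker_of_free_range (f : M →ₗ[R] P) [Module.Free R (ker f)]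
    [Module.Free R (range f)] : Module.Free R M :=
  let ⟨e⟩ := f.nonempty_equiv_ker_prod_range
  .of_equiv e.symm

end Splitting

theorem Module.free_of_injective_pi_of_isBezout {R : Type*} [CommRing R] [IsDomain R]
    [IsBezout R] {ι : Type*} [Finite ι] {N : Type*} [AddCommGroup N] [Module R N]
    [Module.Finite R N] (f : N →ₗ[R] ι → R) (hf : Function.Injective f) : Module.Free R N := by
  induction ι using Finite.induction_empty_option generalizing N with
  | of_equiv e ih =>
    exact ih (LinearEquiv.funCongrLeft R R e ∘ₗ f)
      ((LinearEquiv.funCongrLeft R R e).injective.comp hf)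
  | h_empty =>
    have : Subsingleton N := hf.subsingleton
    exact .of_subsingleton R N
  | h_option ih =>
    set φ : N →ₗ[R] R := proj none ∘ₗ f
    have : Module.Free R (range φ) :=
      (IsBezout.isPrincipal_of_FG _ (Module.Finite.iff_fg.mp inferInstance)).free
    have := φ.finite_ker_of_projective_range
    have : Module.Free R (ker φ) := by
      refine ih (funLeft R R some ∘ₗ f ∘ₗ (ker φ).subtype) fun x y hxy => ?_
      refine Subtype.ext (hf (funext fun i => ?_))
      cases i with
      | none => exact (mem_ker.mp x.2).trans (mem_ker.mp y.2).symm
      | some i => exact congrFun hxy i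
    exact φ.free_of_free_ker_of_free_range

/-- Let `R` be a Bézout domain. Then every finitely generated `R`-submodule of a
finitely generated free `R`-module is itself a free `R`-module. -/
theorem stmt0 (R : Type*) [CommRing R] [IsDomain R] [IsBezout R]
    (M : Type*) [AddCommGroup M] [Module R M] [Module.Finite R M] [Module.Free R M]
    (N : Submodule R M) (hN : N.FG) :
    Module.Free R N := by
  have : Module.Finite R N := Module.Finite.iff_fg.mpr hN
  let b := Module.Free.chooseBasis R M
  exact Module.free_of_injective_pi_of_isBezout (b.equivFun.toLinearMap ∘ₗ N.subtype)
    (b.equivFun.injective.comp N.injective_subtype)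
end

section
/- Let R be an integral domain such that every finitely generated ideal of R is free as an R-module. Then R is a Bézout domain. -/
theorem Ideal.isPrincipal_of_free {R : Type*} [CommRing R] [Nontrivial R] (I : Ideal R)
    [Module.Free R I] : I.IsPrincipal :=
  (Submodule.rank_le_one_iff_isPrincipal I).mp
    ((Submodule.rank_le I).trans_eq (CommSemiring.rank_self R))

/-- Let `R` be an integral domain such that every finitely generated ideal of `R` is
free as an `R`-module. Then `R` is a Bézout domain. -/
theorem stmt1 (R : Type*) [CommRing R] [IsDomain R]
    (h : ∀ I : Ideal R, I.FG → Module.Free R I) :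
    IsBezout R :=
  ⟨fun I hI => have := h I hI; I.isPrincipal_of_free⟩
end

section
/- Let R be a Bézout domain. Then every finitely generated projective R-module is free. -/
/-!
Let `M` be finitely generated and embedded in `Rⁿ⁺¹`. The first coordinate `ℓ : M → R` has
finitely generated, hence principal, hence free image, so `M ≅ ker ℓ × ℓ(M)`. The kernel is
again finitely generated and embeds in `Rⁿ`, so by induction on `n` every finitely generated
submodule of `Rⁿ` is free. A finitely generated projective module is a direct summand, in
particular a submodule, of some `Rⁿ`.
-/

open LinearMap

theorem Submodule.free_of_isPrincipal {R M : Type*} [CommRing R] [IsDomain R] [AddCommGroup M]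
    [Module R M] [Module.IsTorsionFree R M] (N : Submodule R M) (hN : N.IsPrincipal) :
    Module.Free R N := by
  obtain ⟨x, rfl⟩ := hN
  by_cases hx : x = 0
  · subst hx
    rw [Submodule.span_singleton_eq_bot.mpr rfl]
    exact Module.Free.of_subsingleton R _
  · exact Module.Free.of_equiv (LinearEquiv.toSpanNonzeroSingleton R M x hx)

theorem LinearMap.nonempty_equiv_ker_prod_of_surjective {R M B : Type*} [Ring R]
    [AddCommGroup M] [Module R M] [AddCommGroup B] [Module R B] [Module.Projective R B]
    (g : M →ₗ[R] B) (hg : Function.Surjective g) : Nonempty (M ≃ₗ[R] ker g × B) := by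
  obtain ⟨s, hs⟩ := Module.projective_lifting_property g LinearMap.id hg
  exact ⟨(lequivProdOfRightSplitExact (ker g).injective_subtype
    (Submodule.range_subtype _) hs).symm⟩

theorem injOn_funLeft_succ {R : Type*} [CommRing R] {n : ℕ} :
    Set.InjOn (funLeft R R (Fin.succ : Fin n → Fin (n + 1))) {v | v 0 = 0} := by
  intro v (hv : v 0 = 0) w (hw : w 0 = 0) hvw
  funext j
  exact Fin.cases (hv.trans hw.symm) (congr_fun hvw) j

theorem IsBezout.free_of_injective_pi_fin {R : Type*} [CommRing R] [IsDomain R] [IsBezout R]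
    (n : ℕ) {M : Type*} [AddCommGroup M] [Module R M] [Module.Finite R M]
    (i : M →ₗ[R] Fin n → R) (hi : Function.Injective i) : Module.Free R M := by
  induction n generalizing M with
  | zero =>
    have := hi.subsingleton
    exact Module.Free.of_subsingleton R M
  | succ n ih =>
    set ℓ : M →ₗ[R] R := proj 0 ∘ₗ i
    have : Module.Free R (range ℓ) :=
      (range ℓ).free_of_isPrincipal (IsBezout.isPrincipal_of_FG _ (Submodule.fg_range ℓ))
    obtain ⟨e⟩ :=
      ℓ.rangeRestrict.nonempty_equiv_ker_prod_of_surjective ℓ.surjective_rangeRestrict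
    rw [ker_rangeRestrict] at e
    have : Module.Finite R (ker ℓ) :=
      Module.Finite.of_surjective (fst R _ _ ∘ₗ e.toLinearMap)
        (Prod.fst_surjective.comp e.surjective)
    have : Module.Free R (ker ℓ) := by
      refine ih (funLeft R R Fin.succ ∘ₗ i ∘ₗ (ker ℓ).subtype) fun x y hxy => ?_
      exact Subtype.ext (hi (injOn_funLeft_succ x.2 y.2 hxy))
    exact Module.Free.of_equiv e.symm

/-- Let `R` be a Bézout domain. Then every finitely generated projective `R`-module
is free. -/
theorem stmt2 (R : Type*) [CommRing R] [IsDomain R] [IsBezout R]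
    (M : Type*) [AddCommGroup M] [Module R M] [Module.Finite R M]
    [Module.Projective R M] :
    Module.Free R M := by
  obtain ⟨n, p, hp⟩ := Module.Finite.exists_fin' R M
  obtain ⟨s, hs⟩ := Module.projective_lifting_property p LinearMap.id hp
  exact IsBezout.free_of_injective_pi_fin n s (Function.LeftInverse.injective (congr($hs ·)))
end

section
/- Let φ : R → S be a surjective homomorphism of commutative local rings. Then for every n ≥ 1, the induced group homomorphism SL_n(R) → SL_n(S) on special linear groups is surjective. -/
/-! Lift a matrix of `SL_n(S)` entrywise to a matrix `M` over `R`. Since `φ (det M) = 1` and a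
surjection out of a local ring is a local homomorphism, `det M` is a unit `u` with `φ u = 1`;
dividing one row of `M` by `u` gives a lift of determinant one. -/

open Matrix

theorem Matrix.map_surjective {m n α β : Type*} {f : α → β} (hf : Function.Surjective f) :
    Function.Surjective (fun M : Matrix m n α ↦ M.map f) :=
  fun B ↦ ⟨fun i j ↦ (hf (B i j)).choose, ext fun i j ↦ (hf (B i j)).choose_spec⟩

namespace Matrix.SpecialLinearGroup

variable {ι R S : Type*} [Fintype ι] [DecidableEq ι] [CommRing R] [CommRing S]

theorem map_surjective_of_isLocalHom (φ : R →+* S) [IsLocalHom φ] (hφ : Function.Surjective φ) :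
    Function.Surjective (map (n := ι) φ) := by
  intro A
  cases isEmpty_or_nonempty ι
  · exact ⟨1, Subsingleton.elim _ _⟩
  obtain ⟨M, hM : M.map φ = A⟩ := Matrix.map_surjective hφ A.1
  have hφdet : φ M.det = 1 := by rw [RingHom.map_det, RingHom.mapMatrix_apply, hM, A.2]
  obtain ⟨u, hu⟩ := IsUnit.of_map φ M.det (hφdet ▸ isUnit_one)
  have hφu : φ ↑u⁻¹ = 1 := by simpa [hu, hφdet] using congrArg φ u.inv_mul
  let i : ι := Classical.arbitrary ι
  refine ⟨⟨M.updateRow i ((↑u⁻¹ : R) • M i), ?_⟩, Subtype.ext ?_⟩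
  · rw [det_updateRow_smul, updateRow_eq_self, ← hu, Units.inv_mul]
  · change (M.updateRow i _).map φ = A.1
    have hrow : φ ∘ ((↑u⁻¹ : R) • M i) = A.1 i := by
      ext j
      simp [hφu, ← hM]
    rw [map_updateRow, hrow, hM, updateRow_eq_self]

end Matrix.SpecialLinearGroup

theorem stmt5_general (R S : Type*) [CommRing R] [IsLocalRing R] [CommRing S] [IsLocalRing S]
    (φ : R →+* S) (hφ : Function.Surjective φ) (n : ℕ) :
    Function.Surjective
      (Matrix.SpecialLinearGroup.map (n := Fin n) φ :
        Matrix.SpecialLinearGroup (Fin n) R → Matrix.SpecialLinearGroup (Fin n) S) :=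
  have : IsLocalHom φ := .of_surjective φ hφ
  SpecialLinearGroup.map_surjective_of_isLocalHom φ hφ

/-- Let `φ : R → S` be a surjective homomorphism of commutative local rings.  Then for
every `n ≥ 1` the induced homomorphism `SL_n(R) → SL_n(S)` is surjective. -/
theorem stmt5 (R S : Type*) [CommRing R] [IsLocalRing R] [CommRing S] [IsLocalRing S]
    (φ : R →+* S) (hφ : Function.Surjective φ) (n : ℕ) (hn : 1 ≤ n) :
    Function.Surjective
      (Matrix.SpecialLinearGroup.map (n := Fin n) φ :
        Matrix.SpecialLinearGroup (Fin n) R → Matrix.SpecialLinearGroup (Fin n) S) :=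
  stmt5_general R S φ hφ n
end

section
/- Let O be a discrete valuation ring with uniformizer π whose residue field is finite with q elements, let m ≥ 1 and d ≥ 1, and set R = O/π^m O. Then the cardinality of P^d(R), the set of orbits of the scaling action of R^× on the unimodular vectors in R^{d+1}, equals q^{(m-1)d}·(q^{d+1} − 1)/(q − 1). -/
/-!
Over a local ring `S` with maximal ideal `𝔪` a vector is unimodular exactly when one of its
coordinates is a unit, so the non-unimodular vectors in `Sⁿ` are those of `𝔪ⁿ`. Over any
commutative ring the unit group acts freely on unimodular vectors, since `u v = v` gives
`(u - 1) v = 0` and the coordinates of `v` generate `1`. Hence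
`|P^(n-1)(S)| · (|S| - |𝔪|) = |S|ⁿ - |𝔪|ⁿ`. For `S = O/π^m O` one has `|S| = q^m` and
`|𝔪| = q^(m-1)`, and dividing `q^(m(d+1)) - q^((m-1)(d+1))` by `q^m - q^(m-1)` gives the formula.
-/

/-- A vector over a commutative ring is unimodular if its coordinates generate the
unit ideal. -/
def Unimodular {R : Type*} [CommRing R] {n : ℕ} (v : Fin n → R) : Prop :=
  Ideal.span (Set.range v) = ⊤

/-- The scaling action of `Rˣ` on unimodular vectors, as an equivalence relation. -/
def unimodSetoid (R : Type*) [CommRing R] (n : ℕ) :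
    Setoid {v : Fin n → R // Unimodular v} where
  r v w := ∃ u : Rˣ, ∀ i, (u : R) * v.1 i = w.1 i
  iseqv := by
    constructor
    · exact fun v => ⟨1, fun i => one_mul _⟩
    · rintro v w ⟨u, hu⟩
      exact ⟨u⁻¹, fun i => by rw [← hu i, ← mul_assoc, Units.inv_mul, one_mul]⟩
    · rintro a b c ⟨u, hu⟩ ⟨t, ht⟩
      exact ⟨t * u, fun i => by rw [Units.val_mul, mul_assoc, hu i, ht i]⟩

/-- `P^(n-1)(R)`: the set of orbits of the scaling action of `Rˣ` on the unimodular
vectors in `Rⁿ`. -/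
def ProjSet (R : Type*) [CommRing R] (n : ℕ) := Quotient (unimodSetoid R n)

open IsLocalRing

section Unimodular

variable {R : Type*} [CommRing R] {n : ℕ}

theorem Unimodular.units_smul {v : Fin n → R} (hv : Unimodular v) (u : Rˣ) :
    Unimodular (u • v) := by
  rw [Unimodular, eq_top_iff, ← hv, Ideal.span_le]
  rintro _ ⟨i, rfl⟩
  have : v i = (u⁻¹ : Rˣ) * (u • v) i := by simp [Units.smul_def]
  rw [this]
  exact Ideal.mul_mem_left _ _ (Ideal.subset_span ⟨i, rfl⟩)

instance : MulAction Rˣ {v : Fin n → R // Unimodular v} where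
  smul u v := ⟨u • v.1, v.2.units_smul u⟩
  one_smul v := Subtype.ext (one_smul _ v.1)
  mul_smul u w v := Subtype.ext (mul_smul u w v.1)

@[simp]
theorem Unimodular.coe_units_smul (u : Rˣ) (v : {v : Fin n → R // Unimodular v}) :
    (u • v).1 = u • v.1 :=
  rfl

theorem stabilizer_unimodular_eq_bot (v : {v : Fin n → R // Unimodular v}) :
    MulAction.stabilizer Rˣ v = ⊥ := by
  refine (Subgroup.eq_bot_iff_forall _).2 fun u hu => Units.ext ?_
  have hfix : ∀ i, ((u : R) - 1) * v.1 i = 0 := fun i => by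
    rw [sub_mul, one_mul, sub_eq_zero]
    exact congr_fun (congrArg Subtype.val (MulAction.mem_stabilizer_iff.1 hu)) i
  obtain ⟨c, hc⟩ := Ideal.mem_span_range_iff_exists_fun.1 (v.2 ▸ Submodule.mem_top (x := 1))
  rw [Units.val_one, ← sub_eq_zero]
  calc (u : R) - 1 = ((u : R) - 1) * ∑ i, c i * v.1 i := by rw [hc, mul_one]
    _ = ∑ i, c i * (((u : R) - 1) * v.1 i) := by
      rw [Finset.mul_sum]
      exact Finset.sum_congr rfl fun i _ => mul_left_comm _ _ _
    _ = 0 := by simp [hfix]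

theorem unimodSetoid_iff_orbitRel (v w : {v : Fin n → R // Unimodular v}) :
    unimodSetoid R n v w ↔ MulAction.orbitRel Rˣ _ v w := by
  rw [MulAction.orbitRel_apply, MulAction.mem_orbit_iff]
  constructor
  · rintro ⟨u, hu⟩
    exact ⟨u⁻¹, Subtype.ext (funext fun i => by simp [Units.smul_def, ← hu i])⟩
  · rintro ⟨u, hu⟩
    exact ⟨u⁻¹, fun i => by rw [← hu]; simp [Units.smul_def]⟩

noncomputable def unimodularEquivProjSetProdUnits :
    {v : Fin n → R // Unimodular v} ≃ ProjSet R n × Rˣ :=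
  (MulAction.selfEquivOrbitsQuotientProd stabilizer_unimodular_eq_bot).trans
    (Equiv.prodCongrLeft fun _ => Quotient.congrRight fun v w => (unimodSetoid_iff_orbitRel v w).symm)

theorem card_unimodular :
    Nat.card {v : Fin n → R // Unimodular v} = Nat.card (ProjSet R n) * Nat.card Rˣ := by
  rw [Nat.card_congr unimodularEquivProjSetProdUnits, Nat.card_prod]

end Unimodular

section LocalRing

variable {R : Type*} [CommRing R] [IsLocalRing R]

theorem unimodular_iff_exists_isUnit {n : ℕ} (v : Fin n → R) :
    Unimodular v ↔ ∃ i, IsUnit (v i) := by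
  refine ⟨fun hv => ?_, fun ⟨i, hi⟩ =>
    Ideal.eq_top_of_isUnit_mem _ (Ideal.subset_span ⟨i, rfl⟩) hi⟩
  by_contra! hv'
  refine (maximalIdeal.isMaximal R).ne_top (top_le_iff.1 ?_)
  rw [← hv, Ideal.span_le]
  rintro _ ⟨i, rfl⟩
  exact hv' i

theorem card_unimodular_add_card_maximalIdeal_pow [Finite R] (n : ℕ) :
    Nat.card {v : Fin n → R // Unimodular v} + Nat.card (maximalIdeal R) ^ n =
      Nat.card R ^ n := by
  classical
  have e : {v : Fin n → R // ¬ Unimodular v} ≃ (Fin n → maximalIdeal R) :=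
    (Equiv.subtypeEquivRight fun v => by simp [unimodular_iff_exists_isUnit]).trans
      Equiv.subtypePiEquivPi
  have hpow (X : Type _) : Nat.card (Fin n → X) = Nat.card X ^ n := by simp [Nat.card_fun]
  rw [← hpow, ← hpow, ← Nat.card_congr e, ← Nat.card_sum, Nat.card_congr (Equiv.sumCompl _)]

theorem card_units_add_card_maximalIdeal [Finite R] :
    Nat.card Rˣ + Nat.card (maximalIdeal R) = Nat.card R := by
  classical
  have e : Rˣ ⊕ maximalIdeal R ≃ {r : R // IsUnit r} ⊕ {r : R // ¬ IsUnit r} :=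
    (Equiv.ofInjective _ Units.val_injective).sumCongr
      (Equiv.subtypeEquivRight fun r => mem_maximalIdeal r)
  rw [← Nat.card_sum, Nat.card_congr (e.trans (Equiv.sumCompl _))]

theorem card_projSet_mul [Finite R] (n : ℕ) :
    Nat.card (ProjSet R n) * (Nat.card R - Nat.card (maximalIdeal R)) =
      Nat.card R ^ n - Nat.card (maximalIdeal R) ^ n := by
  rw [Nat.sub_eq_of_eq_add card_units_add_card_maximalIdeal.symm,
    Nat.sub_eq_of_eq_add (card_unimodular_add_card_maximalIdeal_pow n).symm, card_unimodular]

end LocalRing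

theorem Nat.eq_pow_mul_div_of_mul_pow_succ_sub_pow {q k d P : ℕ} (hq : 2 ≤ q)
    (h : P * (q ^ (k + 1) - q ^ k) = q ^ ((k + 1) * (d + 1)) - q ^ (k * (d + 1))) :
    P = q ^ (k * d) * ((q ^ (d + 1) - 1) / (q - 1)) := by
  obtain ⟨c, hc⟩ := Nat.sub_one_dvd_pow_sub_one q (d + 1)
  rw [hc, Nat.mul_div_cancel_left c (by omega)]
  have hpos : 0 < q ^ k * (q - 1) := Nat.mul_pos (pow_pos (by omega) k) (by omega)
  refine Nat.eq_of_mul_eq_mul_right hpos ?_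
  calc P * (q ^ k * (q - 1)) = P * (q ^ (k + 1) - q ^ k) := by rw [pow_succ, Nat.mul_sub_one]
    _ = q ^ (k * (d + 1)) * (q ^ (d + 1) - 1) := by
      rw [h, Nat.mul_sub_one, ← pow_add, add_mul, one_mul]
    _ = q ^ (k * d) * c * (q ^ k * (q - 1)) := by rw [hc]; ring

theorem card_maximalIdeal_quotient_mul_card_residueField {O : Type*} [CommRing O] [IsLocalRing O]
    (I : Ideal O) [IsLocalRing (O ⧸ I)] :
    Nat.card (maximalIdeal (O ⧸ I)) * Nat.card (ResidueField O) = Nat.card (O ⧸ I) := by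
  have hI : I ≤ maximalIdeal O := le_maximalIdeal (Ideal.Quotient.nontrivial_iff.1 inferInstance)
  rw [← Submodule.card_quotient_mul_card_quotient _ _ hI]
  congr 1
  refine Nat.card_congr (Equiv.subtypeEquivRight fun x => ?_)
  rw [← map_maximalIdeal_of_surjective _ Ideal.Quotient.mk_surjective,
    Ideal.mem_map_iff_of_surjective _ Ideal.Quotient.mk_surjective, Submodule.mem_map]
  rfl

theorem card_quotient_span_pow {O : Type*} [CommRing O] [IsDomain O] [IsDiscreteValuationRing O]
    {π : O} (hπ : Irreducible π) (m : ℕ) :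
    Nat.card (O ⧸ Ideal.span {π ^ m}) = Nat.card (ResidueField O) ^ m := by
  rw [← Ideal.span_singleton_pow, ← hπ.maximalIdeal_eq, ← Submodule.cardQuot_apply,
    cardQuot_pow_of_prime (IsDiscreteValuationRing.not_a_field O), Submodule.cardQuot_apply]
  rfl

theorem stmt10_general (O : Type*) [CommRing O] [IsDomain O] [IsDiscreteValuationRing O]
    (π : O) (hπ : Irreducible π)
    [Finite (IsLocalRing.ResidueField O)] (q : ℕ)
    (hq : Nat.card (IsLocalRing.ResidueField O) = q)
    (m d : ℕ) (hm : 1 ≤ m) :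
    Nat.card (ProjSet (O ⧸ Ideal.span {π ^ m}) (d + 1)) =
      q ^ ((m - 1) * d) * ((q ^ (d + 1) - 1) / (q - 1)) := by
  obtain ⟨k, rfl⟩ : ∃ k, m = k + 1 := ⟨m - 1, by omega⟩
  have hq2 : 2 ≤ q := hq ▸ Finite.one_lt_card
  have hcard : Nat.card (O ⧸ Ideal.span {π ^ (k + 1)}) = q ^ (k + 1) :=
    hq ▸ card_quotient_span_pow hπ (k + 1)
  have : Finite (O ⧸ Ideal.span {π ^ (k + 1)}) :=
    Nat.finite_of_card_ne_zero (by rw [hcard]; positivity)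
  have : Nontrivial (O ⧸ Ideal.span {π ^ (k + 1)}) :=
    Finite.one_lt_card_iff_nontrivial.1 (hcard ▸ Nat.one_lt_pow k.succ_ne_zero hq2)
  have : IsLocalRing (O ⧸ Ideal.span {π ^ (k + 1)}) :=
    .of_surjective' _ Ideal.Quotient.mk_surjective
  have hmax : Nat.card (maximalIdeal (O ⧸ Ideal.span {π ^ (k + 1)})) = q ^ k := by
    have := card_maximalIdeal_quotient_mul_card_residueField (Ideal.span {π ^ (k + 1)})
    rw [hcard, hq, pow_succ q k] at this
    exact Nat.eq_of_mul_eq_mul_right (by omega) this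
  have hproj := card_projSet_mul (R := O ⧸ Ideal.span {π ^ (k + 1)}) (d + 1)
  rw [hcard, hmax, ← pow_mul, ← pow_mul] at hproj
  simpa using Nat.eq_pow_mul_div_of_mul_pow_succ_sub_pow hq2 hproj

/-- Let `O` be a discrete valuation ring with uniformizer `π` and finite residue field
with `q` elements, let `m, d ≥ 1` and `R = O/π^m O`.  Then
`|P^d(R)| = q^((m-1)d) * (q^(d+1) - 1)/(q - 1)`. -/
theorem stmt10 (O : Type*) [CommRing O] [IsDomain O] [IsDiscreteValuationRing O]
    (π : O) (hπ : Irreducible π)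
    [Finite (IsLocalRing.ResidueField O)] (q : ℕ)
    (hq : Nat.card (IsLocalRing.ResidueField O) = q)
    (m d : ℕ) (hm : 1 ≤ m) (hd : 1 ≤ d) :
    Nat.card (ProjSet (O ⧸ Ideal.span {π ^ m}) (d + 1)) =
      q ^ ((m - 1) * d) * ((q ^ (d + 1) - 1) / (q - 1)) :=
  stmt10_general O π hπ q hq m d hm
end

section
/- Let O be a discrete valuation ring with uniformizer π whose residue field is finite with q elements, let m ≥ 1 and d ≥ 1. The quotient ring homomorphism O/π^{m+1}O → O/π^m O sends unimodular vectors to unimodular vectors and is compatible with unit scaling, hence induces a map ρ_m : P^d(O/π^{m+1}O) → P^d(O/π^m O) on orbit sets. The map ρ_m is surjective, and every fiber of ρ_m has exactly q^d elements. -/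
/-! Over a local ring a vector is unimodular iff some coordinate is a unit, so every point of
`P^d` has a representative with some coordinate `i₀` equal to `1`, and that representative is
unique. The reduction `O/π^(m+1) → O/π^m` is a surjective local homomorphism, so unimodular vectors
and units lift along it, and the fiber over a point normalized at `i₀` is in bijection with the
lifts normalized at `i₀`. Each of the remaining `d` coordinates of such a lift ranges over a coset
of the kernel `π^m O/π^(m+1) O ≅ O/πO`, which has `q` elements. -/

open IsLocalRing

namespace Unimodular

variable {R S : Type*} [CommRing R] [CommRing S] {n : ℕ}

theorem of_apply_eq_one {v : Fin n → R} {i : Fin n} (h : v i = 1) : Unimodular v :=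
  Ideal.eq_top_of_isUnit_mem _ (Ideal.subset_span ⟨i, rfl⟩) (h ▸ isUnit_one)

theorem exists_isUnit [IsLocalRing R] {v : Fin n → R} (hv : Unimodular v) :
    ∃ i, IsUnit (v i) := by
  by_contra! h
  have : Ideal.span (Set.range v) ≤ maximalIdeal R :=
    Ideal.span_le.mpr (Set.range_subset_iff.mpr h)
  exact (maximalIdeal.isMaximal R).ne_top (top_le_iff.mp (hv ▸ this))

theorem map (f : R →+* S) {v : Fin n → R} (hv : Unimodular v) :
    Unimodular fun i => f (v i) := by
  rw [Unimodular, ← Function.comp_def, Set.range_comp, ← Ideal.map_span, hv, Ideal.map_top]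

theorem of_map {f : R →+* S} (hf : Function.Surjective f) [IsLocalHom f] {v : Fin n → R}
    (h : Unimodular fun i => f (v i)) : Unimodular v := by
  obtain ⟨c, hc⟩ := Ideal.mem_span_range_iff_exists_fun.mp (h ▸ Submodule.mem_top (x := 1))
  choose c' hc' using fun i => hf (c i)
  have hunit : IsUnit (f (∑ i, c' i * v i)) := by simp [hc', hc]
  exact Ideal.eq_top_of_isUnit_mem _
    (Ideal.mem_span_range_iff_exists_fun.mpr ⟨c', rfl⟩) (isUnit_of_map_unit f _ hunit)

end Unimodular

namespace ProjSet

variable {R S : Type*} [CommRing R] [CommRing S] {n : ℕ}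

def map (f : R →+* S) : ProjSet R n → ProjSet S n :=
  Quotient.map (fun v => ⟨fun i => f (v.1 i), v.2.map f⟩) <| by
    rintro v w ⟨u, hu⟩
    exact ⟨Units.map f u, fun i => by simp [← hu i]⟩

theorem map_mk (f : R →+* S) {v : Fin n → R} (hv : Unimodular v) :
    map f ⟦⟨v, hv⟩⟧ = ⟦⟨fun i => f (v i), hv.map f⟩⟧ :=
  rfl

theorem map_surjective {f : R →+* S} (hf : Function.Surjective f) [IsLocalHom f] :
    Function.Surjective (map f : ProjSet R n → ProjSet S n) := by
  rintro ⟨w, hw⟩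
  have hv : Unimodular fun i => f (Function.surjInv hf (w i)) := by
    simpa only [Function.surjInv_eq hf] using hw
  exact ⟨⟦⟨_, hv.of_map hf⟩⟧, by simp only [map_mk, Function.surjInv_eq hf]; rfl⟩

theorem mk_eq_mk_iff_of_apply_eq_one {v w : Fin n → R} (hv : Unimodular v) (hw : Unimodular w)
    {i₀ : Fin n} (hv₁ : v i₀ = 1) (hw₁ : w i₀ = 1) :
    (⟦⟨v, hv⟩⟧ : ProjSet R n) = ⟦⟨w, hw⟩⟧ ↔ v = w := by
  refine ⟨fun h => ?_, fun h => by subst h; rfl⟩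
  obtain ⟨u, hu⟩ := Quotient.exact h
  have hu₁ : (u : R) = 1 := by simpa [hv₁, hw₁] using hu i₀
  funext i
  simpa [hu₁] using hu i

theorem exists_mk_eq_of_isUnit {v : Fin n → R} (hv : Unimodular v) {i₀ : Fin n}
    (h : IsUnit (v i₀)) :
    ∃ (w : Fin n → R) (hw : Unimodular w), w i₀ = 1 ∧ (⟦⟨v, hv⟩⟧ : ProjSet R n) = ⟦⟨w, hw⟩⟧ := by
  have hw₁ : (fun i => (↑h.unit⁻¹ : R) * v i) i₀ = 1 := h.val_inv_mul
  exact ⟨_, .of_apply_eq_one hw₁, hw₁, Quotient.sound ⟨h.unit⁻¹, fun i => rfl⟩⟩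

def normalizedLifts (f : R →+* S) (w : Fin n → S) (i₀ : Fin n) : Set (Fin n → R) :=
  {v | (∀ i, f (v i) = w i) ∧ v i₀ = 1}

theorem card_normalizedLifts (f : R →+* S) {q d : ℕ} (hq : ∀ y, Nat.card (f ⁻¹' {y}) = q)
    (w : Fin (d + 1) → S) {i₀ : Fin (d + 1)} (hw₁ : w i₀ = 1) :
    Nat.card (normalizedLifts f w i₀) = q ^ d := by
  let t : Fin (d + 1) → Set R := fun i => if i = i₀ then {1} else f ⁻¹' {w i}
  have hpi : normalizedLifts f w i₀ = Set.univ.pi t := by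
    ext v
    simp only [normalizedLifts, Set.mem_ofPred_eq, Set.mem_univ_pi, t]
    refine ⟨fun ⟨hv, hv₁⟩ i => ?_, fun h => ⟨fun i => ?_, by simpa using h i₀⟩⟩
    · split_ifs with hi
      · exact hi ▸ hv₁
      · exact hv i
    · by_cases hi : i = i₀
      · subst hi
        have hv₁ : v i = 1 := by simpa using h i
        rw [hv₁, map_one, hw₁]
      · simpa [hi] using h i
  calc Nat.card (normalizedLifts f w i₀)
      = ∏ i, Nat.card (t i) := by
        rw [hpi, Nat.card_congr (Equiv.Set.univPi t), Nat.card_pi]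
    _ = q ^ d := by
        rw [Fin.prod_univ_succAbove _ i₀]
        simp only [t, if_pos, Fin.succAbove_ne, if_false, hq, Nat.card_unique, Finset.prod_const,
          Finset.card_univ, Fintype.card_fin, one_mul]

def normalizedLifts.toFiber (f : R →+* S) {w : Fin n → S} (hw : Unimodular w) {i₀ : Fin n}
    (v : normalizedLifts f w i₀) : {y // map f y = ⟦⟨w, hw⟩⟧} :=
  ⟨⟦⟨v.1, .of_apply_eq_one v.2.2⟩⟧, by rw [map_mk]; congr; funext i; exact v.2.1 i⟩

theorem normalizedLifts.bijective_toFiber {f : R →+* S} [IsLocalHom f] {w : Fin n → S}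
    (hw : Unimodular w) {i₀ : Fin n} (hw₁ : w i₀ = 1) :
    Function.Bijective (normalizedLifts.toFiber f hw (i₀ := i₀)) := by
  constructor
  · intro ⟨v, _, hv₁⟩ ⟨v', _, hv'₁⟩ h
    exact Subtype.ext ((mk_eq_mk_iff_of_apply_eq_one _ _ hv₁ hv'₁).mp (congrArg Subtype.val h))
  · rintro ⟨y, hy⟩
    obtain ⟨⟨v, hv⟩, rfl⟩ := Quotient.exists_rep y
    obtain ⟨u, hu⟩ := Quotient.exact hy
    have hunit : IsUnit (v i₀) :=
      isUnit_of_map_unit f _ (.of_mul_eq_one_right _ ((hu i₀).trans hw₁))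
    obtain ⟨v', hv', hv'₁, hvv'⟩ := exists_mk_eq_of_isUnit hv hunit
    have hlift : (fun i => f (v' i)) = w := by
      rw [← mk_eq_mk_iff_of_apply_eq_one (hv'.map f) hw (by simp [hv'₁]) hw₁, ← map_mk f hv',
        ← hvv']
      exact hy
    exact ⟨⟨v', fun i => congrFun hlift i, hv'₁⟩, Subtype.ext hvv'.symm⟩

theorem card_fiber_map [IsLocalRing S] {f : R →+* S} [IsLocalHom f] {q d : ℕ}
    (hq : ∀ y, Nat.card (f ⁻¹' {y}) = q) (x : ProjSet S (d + 1)) :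
    Nat.card {y // map f y = x} = q ^ d := by
  obtain ⟨⟨w₀, hw₀⟩, rfl⟩ := Quotient.exists_rep x
  obtain ⟨i₀, hi₀⟩ := hw₀.exists_isUnit
  obtain ⟨w, hw, hw₁, hx⟩ := exists_mk_eq_of_isUnit hw₀ hi₀
  rw [hx, ← Nat.card_eq_of_bijective _ (normalizedLifts.bijective_toFiber hw hw₁)]
  exact card_normalizedLifts f hq w hw₁

end ProjSet

theorem card_ker_quotient_pow_succ {O : Type*} [CommRing O] [IsDomain O] {π : O} (hπ : π ≠ 0)
    (m : ℕ) :
    Nat.card ((Ideal.span {π ^ m}).map (Ideal.Quotient.mk (Ideal.span {π ^ (m + 1)}))) =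
      Nat.card (O ⧸ Ideal.span {π}) := by
  have hne : Ideal.span {π} ≠ ⊥ := by simpa using hπ
  rw [← Ideal.span_singleton_pow π m, ← Ideal.span_singleton_pow π (m + 1)]
  exact Nat.card_congr ((Ideal.quotEquivPowQuotPowSuccEquiv ⟨⟨π, rfl⟩⟩ hne m).trans
    (Ideal.powQuotPowSuccEquivMapMkPowSuccPow _ m)).symm

theorem card_preimage_of_comp_mk_eq {O : Type*} [CommRing O] [IsDomain O] {π : O} (hπ : π ≠ 0)
    {m : ℕ} (φ : (O ⧸ Ideal.span {π ^ (m + 1)}) →+* (O ⧸ Ideal.span {π ^ m}))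
    (hφ : φ.comp (Ideal.Quotient.mk _) = Ideal.Quotient.mk _) (y : O ⧸ Ideal.span {π ^ m}) :
    Nat.card (φ ⁻¹' {y}) = Nat.card (O ⧸ Ideal.span {π}) := by
  have hsurj : Function.Surjective φ :=
    .of_comp (hφ ▸ Ideal.Quotient.mk_surjective : Function.Surjective (φ.comp _))
  have hker : RingHom.ker φ = (Ideal.span {π ^ m}).map (Ideal.Quotient.mk _) := by
    rw [← Ideal.map_comap_of_surjective _ Ideal.Quotient.mk_surjective (RingHom.ker φ),
      RingHom.comap_ker, hφ, Ideal.mk_ker]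
  rw [← card_ker_quotient_pow_succ hπ m, ← hker]
  exact Nat.card_congr (φ.toAddMonoidHom.fiberEquivKerOfSurjective hsurj y)

theorem stmt11_general (O : Type*) [CommRing O] [IsDomain O] [IsDiscreteValuationRing O]
    (π : O) (hπ : Irreducible π)
    (q : ℕ)
    (hq : Nat.card (IsLocalRing.ResidueField O) = q)
    (m d : ℕ) (hm : 1 ≤ m)
    (φ : (O ⧸ Ideal.span {π ^ (m + 1)}) →+* (O ⧸ Ideal.span {π ^ m}))
    (hφ : ∀ a : O, φ (Ideal.Quotient.mk (Ideal.span {π ^ (m + 1)}) a) =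
      Ideal.Quotient.mk (Ideal.span {π ^ m}) a) :
    (∀ v : Fin (d + 1) → O ⧸ Ideal.span {π ^ (m + 1)},
      Unimodular v → Unimodular fun i => φ (v i)) ∧
    ∃ ρ : ProjSet (O ⧸ Ideal.span {π ^ (m + 1)}) (d + 1) →
        ProjSet (O ⧸ Ideal.span {π ^ m}) (d + 1),
      (∀ (v : Fin (d + 1) → O ⧸ Ideal.span {π ^ (m + 1)}) (hv : Unimodular v)
          (hv' : Unimodular fun i => φ (v i)),
          ρ (Quotient.mk (unimodSetoid _ _) ⟨v, hv⟩) =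
            Quotient.mk (unimodSetoid _ _) ⟨fun i => φ (v i), hv'⟩) ∧
      Function.Surjective ρ ∧
      ∀ x, Nat.card {y // ρ y = x} = q ^ d := by
  have hφ' : φ.comp (Ideal.Quotient.mk _) = Ideal.Quotient.mk _ := RingHom.ext hφ
  have hnontrivial (k : ℕ) (hk : 1 ≤ k) : Nontrivial (O ⧸ Ideal.span {π ^ k}) := by
    rw [Ideal.Quotient.nontrivial_iff, Ne, Ideal.span_singleton_eq_top, isUnit_pow_iff (by omega)]
    exact hπ.not_isUnit
  have := hnontrivial m hm
  have := hnontrivial (m + 1) (by omega)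
  have : IsLocalRing (O ⧸ Ideal.span {π ^ m}) := .of_surjective' _ Ideal.Quotient.mk_surjective
  have : IsLocalRing (O ⧸ Ideal.span {π ^ (m + 1)}) :=
    .of_surjective' _ Ideal.Quotient.mk_surjective
  have hsurj : Function.Surjective φ :=
    .of_comp (hφ' ▸ Ideal.Quotient.mk_surjective : Function.Surjective (φ.comp _))
  have : IsLocalHom φ := .of_surjective φ hsurj
  refine ⟨fun v hv => hv.map φ, ProjSet.map φ, fun v hv _ => ProjSet.map_mk φ hv,
    ProjSet.map_surjective hsurj, ProjSet.card_fiber_map fun y => ?_⟩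
  rw [card_preimage_of_comp_mk_eq hπ.ne_zero φ hφ' y, ← hq, ← hπ.maximalIdeal_eq]
  rfl

/-- Let `O` be a DVR with uniformizer `π` and finite residue field with `q` elements,
and let `m, d ≥ 1`.  The quotient homomorphism `φ : O/π^(m+1)O → O/π^m O` sends
unimodular vectors to unimodular vectors and is compatible with unit scaling, hence
induces a map `ρ : P^d(O/π^(m+1)O) → P^d(O/π^m O)`; moreover `ρ` is surjective and
each of its fibers has exactly `q^d` elements. -/
theorem stmt11 (O : Type*) [CommRing O] [IsDomain O] [IsDiscreteValuationRing O]
    (π : O) (hπ : Irreducible π)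
    [Finite (IsLocalRing.ResidueField O)] (q : ℕ)
    (hq : Nat.card (IsLocalRing.ResidueField O) = q)
    (m d : ℕ) (hm : 1 ≤ m) (hd : 1 ≤ d)
    (φ : (O ⧸ Ideal.span {π ^ (m + 1)}) →+* (O ⧸ Ideal.span {π ^ m}))
    (hφ : ∀ a : O, φ (Ideal.Quotient.mk (Ideal.span {π ^ (m + 1)}) a) =
      Ideal.Quotient.mk (Ideal.span {π ^ m}) a) :
    (∀ v : Fin (d + 1) → O ⧸ Ideal.span {π ^ (m + 1)},
      Unimodular v → Unimodular fun i => φ (v i)) ∧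
    ∃ ρ : ProjSet (O ⧸ Ideal.span {π ^ (m + 1)}) (d + 1) →
        ProjSet (O ⧸ Ideal.span {π ^ m}) (d + 1),
      (∀ (v : Fin (d + 1) → O ⧸ Ideal.span {π ^ (m + 1)}) (hv : Unimodular v)
          (hv' : Unimodular fun i => φ (v i)),
          ρ (Quotient.mk (unimodSetoid _ _) ⟨v, hv⟩) =
            Quotient.mk (unimodSetoid _ _) ⟨fun i => φ (v i), hv'⟩) ∧
      Function.Surjective ρ ∧
      ∀ x, Nat.card {y // ρ y = x} = q ^ d :=
  stmt11_general O π hπ q hq m d hm φ hφ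
end

section
/- Let p be a prime and let (M_m)_{m ≥ 1} be a sequence of abelian groups together with surjective group homomorphisms f_m : M_{m+1} → M_m, where each M_m has no p-torsion (multiplication by p on M_m is injective). Let L be the inverse limit, realized as the subgroup of the product ∏_m M_m consisting of sequences (x_m) with f_m(x_{m+1}) = x_m for all m, and let L' be the analogous subgroup of ∏_m (M_m/pM_m) of sequences compatible with the induced maps. Then the natural group homomorphism L/pL → L' is an isomorphism. -/
/-!
Injectivity: if a compatible sequence is divisible by `p` in every `M_m`, the quotients are unique
because `M_m` has no `p`-torsion, hence again compatible. Surjectivity: a compatible sequence of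
residues is lifted step by step; a lift in `M_(m+1)` of the next residue maps to the current lift
only up to an element of `pM_m`, which is absorbed by adding a `p`-th multiple of one of its
preimages under the surjection `f_m`.
-/

/-- The subgroup `pA` of `p`-th multiples of an additive commutative group `A`. -/
def pMultiples (p : ℕ) (A : Type*) [AddCommGroup A] : AddSubgroup A where
  carrier := Set.range fun a : A => p • a
  add_mem' := by rintro _ _ ⟨a, rfl⟩ ⟨b, rfl⟩; exact ⟨a + b, smul_add p a b⟩
  zero_mem' := ⟨0, smul_zero p⟩
  neg_mem' := by rintro _ ⟨a, rfl⟩; exact ⟨-a, smul_neg p a⟩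

section
variable (p : ℕ) (M : ℕ → Type*) [∀ m, AddCommGroup (M m)] (f : ∀ m, M (m + 1) →+ M m)

/-- The inverse limit `L` of the system `(M_m, f_m)`, realized as the subgroup of
`∏ m, M m` of compatible sequences. -/
def invLim : AddSubgroup (∀ m, M m) where
  carrier := {x | ∀ m, f m (x (m + 1)) = x m}
  add_mem' := by intro x y hx hy m; simp [hx m, hy m]
  zero_mem' := by intro m; simp
  neg_mem' := by intro x hx m; simp [hx m]

/-- The homomorphism `M_(m+1)/pM_(m+1) → M_m/pM_m` induced by `f_m`. -/
def fbar (m : ℕ) :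
    (M (m + 1) ⧸ pMultiples p (M (m + 1))) →+ (M m ⧸ pMultiples p (M m)) :=
  QuotientAddGroup.map _ _ (f m) (by
    rintro _ ⟨a, rfl⟩
    exact ⟨f m a, (map_nsmul (f m) p a).symm⟩)

/-- The inverse limit `L'` of the system `(M_m/pM_m)` with the induced maps. -/
def invLimModP : AddSubgroup (∀ m, M m ⧸ pMultiples p (M m)) where
  carrier := {x | ∀ m, fbar p M f m (x (m + 1)) = x m}
  add_mem' := by intro x y hx hy m; simp [hx m, hy m]
  zero_mem' := by intro m; simp
  neg_mem' := by intro x hx m; simp [hx m]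

/-- Componentwise reduction modulo `p`, as a homomorphism `L → L'`. -/
def reduceHom : invLim M f →+ invLimModP p M f where
  toFun x := ⟨fun m => QuotientAddGroup.mk (x.1 m), fun m => by
    show fbar p M f m (QuotientAddGroup.mk (x.1 (m + 1))) = _
    rw [fbar, QuotientAddGroup.map_mk, x.2 m]⟩
  map_zero' := rfl
  map_add' x y := rfl

/-- The natural homomorphism `L/pL → L'`. -/
def natMap : (invLim M f ⧸ pMultiples p (invLim M f)) →+ invLimModP p M f :=
  QuotientAddGroup.lift _ (reduceHom p M f) (by
    rintro _ ⟨a, rfl⟩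
    simp only [AddMonoidHom.mem_ker]
    show reduceHom p M f (p • a) = 0
    rw [map_nsmul (reduceHom p M f) p a]
    ext m
    show (p • (reduceHom p M f a).1) m = 0
    show p • QuotientAddGroup.mk (a.1 m) = (0 : M m ⧸ pMultiples p (M m))
    rw [← QuotientAddGroup.mk_nsmul]
    exact (QuotientAddGroup.eq_zero_iff _).mpr ⟨a.1 m, rfl⟩)

theorem mem_pMultiples_iff {A : Type*} [AddCommGroup A] {x : A} :
    x ∈ pMultiples p A ↔ ∃ a, p • a = x :=
  Iff.rfl

theorem exists_mk_eq_and_eq_of_surjective {A B : Type*} [AddCommGroup A] [AddCommGroup B]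
    {g : A →+ B} (hg : Function.Surjective g) {a : B} {c : A}
    (h : (QuotientAddGroup.mk (g c) : B ⧸ pMultiples p B) = QuotientAddGroup.mk a) :
    ∃ b : A, (QuotientAddGroup.mk b : A ⧸ pMultiples p A) = QuotientAddGroup.mk c ∧ g b = a := by
  obtain ⟨u, hu⟩ := (mem_pMultiples_iff p).mp (QuotientAddGroup.eq.mp h)
  obtain ⟨v, rfl⟩ := hg u
  refine ⟨c + p • v, QuotientAddGroup.eq.mpr ?_, ?_⟩
  · exact (mem_pMultiples_iff p).mpr ⟨-v, by rw [neg_add_rev, neg_add_cancel_right, smul_neg]⟩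
  · rw [map_add, map_nsmul, hu, add_neg_cancel_left]

theorem fbar_mk (m : ℕ) (c : M (m + 1)) :
    fbar p M f m (QuotientAddGroup.mk c) = QuotientAddGroup.mk (f m c) :=
  QuotientAddGroup.map_mk _ _ _ _ c

theorem exists_mem_invLim_of_forall_exists_lift {P : ∀ m, M m → Prop} (h0 : ∃ a, P 0 a)
    (hstep : ∀ m a, P m a → ∃ b, P (m + 1) b ∧ f m b = a) :
    ∃ x ∈ invLim M f, ∀ m, P m (x m) := by
  obtain ⟨a₀, ha₀⟩ := h0
  choose g hgP hgf using hstep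
  let s : ∀ m, {a // P m a} := fun m =>
    Nat.rec ⟨a₀, ha₀⟩ (fun n a => ⟨g n a a.2, hgP n a a.2⟩) m
  exact ⟨fun m => (s m).1, fun m => hgf m _ (s m).2, fun m => (s m).2⟩

theorem mem_pMultiples_invLim (htf : ∀ m, Function.Injective fun x : M m => p • x)
    (x : invLim M f) (hx : ∀ m, x.1 m ∈ pMultiples p (M m)) :
    x ∈ pMultiples p (invLim M f) := by
  choose y hy using hx
  have hcomp : ∀ m, f m (y (m + 1)) = y m := fun m =>
    htf m (by simp only [← map_nsmul, hy, x.2 m])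
  exact ⟨⟨y, hcomp⟩, Subtype.ext (funext hy)⟩

theorem natMap_injective (htf : ∀ m, Function.Injective fun x : M m => p • x) :
    Function.Injective (natMap p M f) := by
  rw [injective_iff_map_eq_zero]
  rintro ⟨x⟩ hx
  refine (QuotientAddGroup.eq_zero_iff _).mpr (mem_pMultiples_invLim p M f htf x fun m => ?_)
  exact (QuotientAddGroup.eq_zero_iff _).mp (congrFun (congrArg Subtype.val hx) m)

theorem natMap_surjective (hsurj : ∀ m, Function.Surjective (f m)) :
    Function.Surjective (natMap p M f) := by
  intro z
  have hlift : ∀ m (a : M m), QuotientAddGroup.mk a = z.1 m →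
      ∃ b, QuotientAddGroup.mk b = z.1 (m + 1) ∧ f m b = a := by
    intro m a ha
    obtain ⟨c, hc⟩ := QuotientAddGroup.mk_surjective (z.1 (m + 1))
    have hfc : (QuotientAddGroup.mk (f m c) : M m ⧸ pMultiples p (M m)) =
        QuotientAddGroup.mk a := by
      rw [ha, ← z.2 m, ← hc, fbar_mk]
    rw [← hc]
    exact exists_mk_eq_and_eq_of_surjective p (hsurj m) hfc
  obtain ⟨x, hx, hxz⟩ :=
    exists_mem_invLim_of_forall_exists_lift M f (QuotientAddGroup.mk_surjective (z.1 0)) hlift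
  exact ⟨QuotientAddGroup.mk ⟨x, hx⟩, Subtype.ext (funext hxz)⟩

theorem stmt13
    (hsurj : ∀ m, Function.Surjective (f m))
    (htf : ∀ m, Function.Injective fun x : M m => p • x) :
    Function.Bijective (natMap p M f) :=
  ⟨natMap_injective p M f htf, natMap_surjective p M f hsurj⟩

end
end

section
/- Let p be a prime, G a group, and let 0 → A → B → C → 0 be a short exact sequence of abelian groups equipped with G-actions by group automorphisms, where the maps α : A → B and β : B → C are G-equivariant (α injective, β surjective, ker β = im α). Assume that G acts trivially on A, that C has no p-torsion (multiplication by p on C is injective), and that the only G-invariant element of C/pC is 0. Then the homomorphism A/pA → (B/pB)^G induced by α is an isomorphism, where (B/pB)^G denotes the subgroup of G-invariant elements of B/pB. -/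
/-- The homomorphism `A/pA → B/pB` induced by a homomorphism `α : A → B`. -/
def mapBar (p : ℕ) {A B : Type*} [AddCommGroup A] [AddCommGroup B] (α : A →+ B) :
    (A ⧸ pMultiples p A) →+ (B ⧸ pMultiples p B) :=
  QuotientAddGroup.map _ _ α (by
    rintro _ ⟨a, rfl⟩
    exact ⟨α a, (map_nsmul α p a).symm⟩)

/-- The action of a group element `g` on `B/pB` induced by a distributive action
of `G` on `B`. -/
def actionBar (p : ℕ) {G : Type*} [Group G] (B : Type*) [AddCommGroup B]
    [DistribMulAction G B] (g : G) : (B ⧸ pMultiples p B) →+ (B ⧸ pMultiples p B) :=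
  QuotientAddGroup.map _ _ (DistribMulAction.toAddMonoidHom B g) (by
    rintro _ ⟨b, rfl⟩
    exact ⟨g • b, (map_nsmul (DistribMulAction.toAddMonoidHom B g) p b).symm⟩)

/-! Tensoring with `ℤ/p` is right exact, and it is also left exact on `0 → A → B → C`
when `C` has no `p`-torsion: if `α a = p b` then `p (β b) = 0`, so `b` comes from `A`.
An invariant class of `B/pB` maps to an invariant class of `C/pC`, which vanishes, so it
comes from `A/pA`; conversely classes from `A/pA` are invariant since `G` fixes `A`. -/

section ModP

variable {p : ℕ} {A B C : Type*} [AddCommGroup A] [AddCommGroup B] [AddCommGroup C]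

@[simp]
lemma mapBar_mk (α : A →+ B) (a : A) :
    mapBar p α (a : A ⧸ pMultiples p A) = (α a : B ⧸ pMultiples p B) := rfl

lemma mk_eq_zero_iff_exists_nsmul {x : A} :
    (x : A ⧸ pMultiples p A) = 0 ↔ ∃ a : A, p • a = x :=
  QuotientAddGroup.eq_zero_iff x

lemma mk_eq_mk_iff_exists_nsmul {x y : A} :
    (x : A ⧸ pMultiples p A) = y ↔ ∃ a : A, p • a = -x + y :=
  QuotientAddGroup.eq

lemma mapBar_injective {α : A →+ B} {β : B →+ C} (hα : Function.Injective α)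
    (hexact : ∀ b : B, β b = 0 ↔ b ∈ α.range) (hC : ∀ c : C, p • c = 0 → c = 0) :
    Function.Injective (mapBar p α) := by
  rw [injective_iff_map_eq_zero]
  intro x hx
  induction x using QuotientAddGroup.induction_on with
  | H a =>
    rw [mapBar_mk, mk_eq_zero_iff_exists_nsmul] at hx
    obtain ⟨b, hb⟩ := hx
    have hβb : β b = 0 := hC _ <| by
      rw [← map_nsmul, hb]
      exact (hexact _).2 ⟨a, rfl⟩
    obtain ⟨a', rfl⟩ := (hexact b).1 hβb
    exact mk_eq_zero_iff_exists_nsmul.2 ⟨a', hα (by rw [map_nsmul, hb])⟩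

lemma mem_range_mapBar_of_mapBar_eq_zero {α : A →+ B} {β : B →+ C}
    (hβ : Function.Surjective β) (hexact : ∀ b : B, β b = 0 → b ∈ α.range)
    {x : B ⧸ pMultiples p B} (hx : mapBar p β x = 0) : x ∈ Set.range (mapBar p α) := by
  induction x using QuotientAddGroup.induction_on with
  | H b =>
    rw [mapBar_mk, mk_eq_zero_iff_exists_nsmul] at hx
    obtain ⟨c, hc⟩ := hx
    obtain ⟨b', rfl⟩ := hβ c
    obtain ⟨a, ha⟩ := hexact (b - p • b') (by rw [map_sub, map_nsmul, hc, sub_self])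
    refine ⟨a, mk_eq_mk_iff_exists_nsmul.2 ⟨b', ?_⟩⟩
    rw [ha]
    abel

variable {G : Type*} [Group G]

@[simp]
lemma actionBar_mk [DistribMulAction G B] (g : G) (b : B) :
    actionBar p B g (b : B ⧸ pMultiples p B) = ((g • b : B) : B ⧸ pMultiples p B) := rfl

lemma mapBar_actionBar [DistribMulAction G B] [DistribMulAction G C] {β : B →+ C}
    (hβ : ∀ (g : G) (b : B), β (g • b) = g • β b) (g : G) (x : B ⧸ pMultiples p B) :
    mapBar p β (actionBar p B g x) = actionBar p C g (mapBar p β x) := by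
  induction x using QuotientAddGroup.induction_on with
  | H b => simp only [actionBar_mk, mapBar_mk, hβ]

lemma actionBar_mapBar_of_smul_eq_self [DistribMulAction G A] [DistribMulAction G B]
    {α : A →+ B} (hα : ∀ (g : G) (a : A), α (g • a) = g • α a)
    (hA : ∀ (g : G) (a : A), g • a = a) (g : G) (x : A ⧸ pMultiples p A) :
    actionBar p B g (mapBar p α x) = mapBar p α x := by
  induction x using QuotientAddGroup.induction_on with
  | H a => simp only [mapBar_mk, actionBar_mk, ← hα, hA]

end ModP

theorem stmt14_general (p : ℕ) (G : Type*) [Group G]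
    (A B C : Type*) [AddCommGroup A] [AddCommGroup B] [AddCommGroup C]
    [DistribMulAction G A] [DistribMulAction G B] [DistribMulAction G C]
    (α : A →+ B) (β : B →+ C)
    (hαequiv : ∀ (g : G) (a : A), α (g • a) = g • α a)
    (hβequiv : ∀ (g : G) (b : B), β (g • b) = g • β b)
    (hGA : ∀ (g : G) (a : A), g • a = a)
    (hαinj : Function.Injective α)
    (hβsurj : Function.Surjective β)
    (hexact : ∀ b : B, β b = 0 ↔ b ∈ α.range)
    (hCtf : ∀ c : C, p • c = 0 → c = 0)
    (hCinv : ∀ x : C ⧸ pMultiples p C, (∀ g : G, actionBar p C g x = x) → x = 0) :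
    Function.Injective (mapBar p α) ∧
      Set.range (mapBar p α) =
        {x : B ⧸ pMultiples p B | ∀ g : G, actionBar p B g x = x} := by
  refine ⟨mapBar_injective hαinj hexact hCtf, Set.Subset.antisymm ?_ fun x hx => ?_⟩
  · rintro _ ⟨y, rfl⟩ g
    exact actionBar_mapBar_of_smul_eq_self hαequiv hGA g y
  · have hβx : mapBar p β x = 0 := hCinv _ fun g => by
      rw [← mapBar_actionBar hβequiv, hx g]
    exact mem_range_mapBar_of_mapBar_eq_zero hβsurj (fun b => (hexact b).1) hβx

/-- Let `p` be a prime, `G` a group, and `0 → A → B → C → 0` a short exact sequence of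
abelian groups with `G`-actions and `G`-equivariant maps `α, β`.  Assume `G` acts
trivially on `A`, `C` has no `p`-torsion, and the only `G`-invariant element of
`C/pC` is `0`.  Then the induced homomorphism `A/pA → B/pB` is injective with image
exactly the `G`-invariants of `B/pB`; that is, `A/pA → (B/pB)^G` is an
isomorphism. -/
theorem stmt14 (p : ℕ) (hp : p.Prime) (G : Type*) [Group G]
    (A B C : Type*) [AddCommGroup A] [AddCommGroup B] [AddCommGroup C]
    [DistribMulAction G A] [DistribMulAction G B] [DistribMulAction G C]
    (α : A →+ B) (β : B →+ C)
    (hαequiv : ∀ (g : G) (a : A), α (g • a) = g • α a)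
    (hβequiv : ∀ (g : G) (b : B), β (g • b) = g • β b)
    (hGA : ∀ (g : G) (a : A), g • a = a)
    (hαinj : Function.Injective α)
    (hβsurj : Function.Surjective β)
    (hexact : ∀ b : B, β b = 0 ↔ b ∈ α.range)
    (hCtf : ∀ c : C, p • c = 0 → c = 0)
    (hCinv : ∀ x : C ⧸ pMultiples p C, (∀ g : G, actionBar p C g x = x) → x = 0) :
    Function.Injective (mapBar p α) ∧
      Set.range (mapBar p α) =
        {x : B ⧸ pMultiples p B | ∀ g : G, actionBar p B g x = x} :=
  stmt14_general p G A B C α β hαequiv hβequiv hGA hαinj hβsurj hexact hCtf hCinv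
end

section
/- Let Γ be a group and let B be a commutative ring with a Γ-grading B = ⊕_{g ∈ Γ} B_g by additive subgroups satisfying B_g·B_h ⊆ B_{gh} and 1 ∈ B_1, and suppose the grading is strong: B_g·B_{g^{-1}} = B_1 for every g ∈ Γ. Set A = B_1, which is a subring of B, and regard each B_g as an A-module. Then each B_g is a finitely generated projective A-module, and for all g, h ∈ Γ the multiplication of B induces an isomorphism of A-modules B_g ⊗_A B_h ≅ B_{gh}. -/
open scoped TensorProduct

/-!
If `B_g · B_{g⁻¹} = B_1 = A` for every `g`, then each `B_g` is an invertible `A`-submodule of `B`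
with inverse `B_{g⁻¹}`, and `B_{gh} = B_g B_{g⁻¹} B_{gh} ⊆ B_g B_h ⊆ B_{gh}`. Invertible submodules
of a faithful `A`-algebra are finitely generated and projective, and multiplication
`I ⊗[A] J → I * J` is an isomorphism for invertible `I`, `J`.
-/

namespace Submodule

variable {Γ R A : Type*} [Group Γ] [CommSemiring R] [Semiring A] [Algebra R A]
  {ℬ : Γ → Submodule R A}

theorem isUnit_of_mul_inv_eq_one (hstrong : ∀ g, ℬ g * ℬ g⁻¹ = 1) (g : Γ) : IsUnit (ℬ g) :=
  ⟨⟨ℬ g, ℬ g⁻¹, hstrong g, by simpa using hstrong g⁻¹⟩, rfl⟩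

theorem mul_eq_of_mul_inv_eq_one (hmul : ∀ g h, ℬ g * ℬ h ≤ ℬ (g * h))
    (hstrong : ∀ g, ℬ g * ℬ g⁻¹ = 1) (g h : Γ) : ℬ g * ℬ h = ℬ (g * h) := by
  refine le_antisymm (hmul g h) ?_
  calc ℬ (g * h) = ℬ g * (ℬ g⁻¹ * ℬ (g * h)) := by rw [← mul_assoc, hstrong, one_mul]
    _ ≤ ℬ g * ℬ (g⁻¹ * (g * h)) := mul_le_mul_right (hmul _ _) _
    _ = ℬ g * ℬ h := by rw [inv_mul_cancel_left]

end Submodule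

theorem stmt17_general (Γ : Type*) [Group Γ]
    (A B : Type*) [CommRing A] [CommRing B] [Algebra A B]
    (hinj : Function.Injective (algebraMap A B))
    (ℬ : Γ → Submodule A B)
    (hmul : ∀ g h : Γ, ℬ g * ℬ h ≤ ℬ (g * h))
    (hone : ℬ 1 = (1 : Submodule A B))
    (hstrong : ∀ g : Γ, ℬ g * ℬ g⁻¹ = ℬ 1) :
    ∀ g h : Γ,
      (Module.Finite A (ℬ g) ∧ Module.Projective A (ℬ g)) ∧
      ∃ e : (ℬ g ⊗[A] ℬ h) ≃ₗ[A] ℬ (g * h),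
        ∀ (x : ℬ g) (y : ℬ h), (e (x ⊗ₜ y) : B) = (x : B) * (y : B) := by
  intro g h
  have : FaithfulSMul A B := (faithfulSMul_iff_algebraMap_injective A B).mpr hinj
  have hstrong₁ : ∀ g, ℬ g * ℬ g⁻¹ = 1 := fun g ↦ (hstrong g).trans hone
  have hunit := Submodule.isUnit_of_mul_inv_eq_one hstrong₁
  refine ⟨⟨Module.Finite.iff_fg.mpr (Submodule.fg_of_isUnit (hunit g)),
    Submodule.projective_of_isUnit (hunit g)⟩, ?_⟩
  exact ⟨Submodule.tensorEquivMul (hunit g).unit (hunit h).unit ≪≫ₗ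
    LinearEquiv.ofEq _ _ (Submodule.mul_eq_of_mul_inv_eq_one hmul hstrong₁ g h), fun _ _ ↦ rfl⟩

/-- Let `Γ` be a group and `B` a commutative ring with a strong `Γ`-grading
`B = ⊕_{g} B_g` (so `B_g · B_h ⊆ B_{gh}`, `1 ∈ B_1`, and `B_g · B_{g⁻¹} = B_1` for
all `g`), with base component `B_1 = A`.  Then each `B_g` is a finitely generated
projective `A`-module, and multiplication induces an isomorphism of `A`-modules
`B_g ⊗[A] B_h ≃ B_{gh}`.  (Here the situation is encoded by a commutative `A`-algebra
`B` with `A` embedded as the component of the grading at `1 ∈ Γ`.) -/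
theorem stmt17 (Γ : Type*) [Group Γ] [DecidableEq Γ]
    (A B : Type*) [CommRing A] [CommRing B] [Algebra A B]
    (hinj : Function.Injective (algebraMap A B))
    (ℬ : Γ → Submodule A B)
    (hdecomp : DirectSum.IsInternal ℬ)
    (hmul : ∀ g h : Γ, ℬ g * ℬ h ≤ ℬ (g * h))
    (hone : ℬ 1 = (1 : Submodule A B))
    (hstrong : ∀ g : Γ, ℬ g * ℬ g⁻¹ = ℬ 1) :
    ∀ g h : Γ,
      (Module.Finite A (ℬ g) ∧ Module.Projective A (ℬ g)) ∧
      ∃ e : (ℬ g ⊗[A] ℬ h) ≃ₗ[A] ℬ (g * h),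
        ∀ (x : ℬ g) (y : ℬ h), (e (x ⊗ₜ y) : B) = (x : B) * (y : B) :=
  stmt17_general Γ A B hinj ℬ hmul hone hstrong
end

section
/- Let Γ be a finite abelian group of exponent e and let K be a field containing a primitive e-th root of unity. Let B be a commutative K-algebra equipped with an action of Γ by K-algebra automorphisms, let A = B^Γ be the fixed subalgebra, and assume B is finitely generated as an A-module. Assume further that the canonical map B ⊗_A B → Fun(Γ, B) sending x ⊗ y to the function γ ↦ x·(γ·y) is bijective (i.e., A ⊆ B is a Γ-Galois extension). For each character χ : Γ → K^×, let B_χ = {b ∈ B : γ·b = χ(γ)b for all γ ∈ Γ}, an A-submodule of B. Then for all characters χ, ψ of Γ: (i) B_χ·B_ψ = B_{χψ} as A-submodules of B; (ii) multiplication induces an isomorphism of A-modules B_χ ⊗_A B_ψ ≅ B_{χψ}; and (iii) each B_χ is an invertible A-module, i.e., finitely generated projective with B_χ·B_{χ^{-1}} = A. -/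
/-!
Surjectivity of the Galois map yields pairs `(xₚ, yₚ)` with `∑ₚ γ•xₚ · δ•yₚ = [γ = δ]`.
Replacing `xₚ` and `yₚ` by their twisted traces `∑ γ, χ(γ)⁻¹ • γ•b`, which land in `B_χ` and
`B_{χ⁻¹}`, the sum of products collapses to `|Γ|`. This is a unit of `K`, because `|Γ|` divides
a power of the exponent `e` and `e` is invertible in a field with a primitive `e`-th root of
unity. Hence `1 ∈ B_χ · B_{χ⁻¹}`, so `B_χ · B_{χ⁻¹} = A` and every `B_χ` is an invertible
`A`-submodule of `B`; the product formula, the tensor isomorphism and finite projectivity are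
then properties of invertible submodules.
-/

open scoped TensorProduct

section

variable (K Γ B : Type*) [Field K] [CommGroup Γ] [Fintype Γ]
  [CommRing B] [Algebra K B] [MulSemiringAction Γ B] [SMulCommClass Γ K B]

/-- The fixed subalgebra `A = B^Γ` of a `K`-algebra `B` under an action of `Γ` by
`K`-algebra automorphisms. -/
def fixedSubalgebra : Subalgebra K B where
  carrier := {b | ∀ γ : Γ, γ • b = b}
  mul_mem' := fun ha hb γ => by rw [smul_mul', ha γ, hb γ]
  add_mem' := fun ha hb γ => by rw [smul_add, ha γ, hb γ]
  algebraMap_mem' := fun k γ => by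
    rw [Algebra.algebraMap_eq_smul_one, smul_comm, smul_one]

/-- The `χ`-component `B_χ = {b ∈ B : γ • b = χ(γ) b for all γ}` as a module over
the fixed subalgebra `A = B^Γ`. -/
def charComponent (χ : Γ →* Kˣ) : Submodule (fixedSubalgebra K Γ B) B where
  carrier := {b | ∀ γ : Γ, γ • b = (χ γ : K) • b}
  add_mem' := by intro a b ha hb γ; rw [smul_add, ha γ, hb γ, smul_add]
  zero_mem' := by intro γ; simp
  smul_mem' := by
    intro a b hb γ
    rw [Algebra.smul_def, smul_mul', hb γ]
    have ha : (γ • ((algebraMap (fixedSubalgebra K Γ B) B) a) : B)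
        = (algebraMap (fixedSubalgebra K Γ B) B) a := a.2 γ
    rw [ha, Algebra.smul_def, Algebra.smul_def, mul_left_comm]

/-- The canonical `A`-bilinear map `B × B → Fun(Γ, B)`, `(x, y) ↦ (γ ↦ x·(γ•y))`. -/
def galoisBilinear :
    B →ₗ[fixedSubalgebra K Γ B] B →ₗ[fixedSubalgebra K Γ B] (Γ → B) where
  toFun b :=
    { toFun := fun b' γ => b * γ • b'
      map_add' := fun x y => funext fun γ => by
        show b * γ • (x + y) = b * γ • x + b * γ • y
        rw [smul_add, mul_add]
      map_smul' := fun a x => funext fun γ => by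
        have ha : (γ • ((algebraMap (fixedSubalgebra K Γ B) B) a) : B)
            = (algebraMap (fixedSubalgebra K Γ B) B) a := a.2 γ
        show b * γ • (a • x) = a • (b * γ • x)
        rw [Algebra.smul_def, smul_mul', ha, Algebra.smul_def, mul_left_comm] }
  map_add' := fun x y => LinearMap.ext fun b' => funext fun γ => by
    show (x + y) * γ • b' = x * γ • b' + y * γ • b'
    rw [add_mul]
  map_smul' := fun a x => LinearMap.ext fun b' => funext fun γ => by
    show (a • x) * γ • b' = a • (x * γ • b')
    rw [Algebra.smul_def, Algebra.smul_def, mul_assoc]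

/-- The canonical map `B ⊗[A] B → Fun(Γ, B)` sending `x ⊗ y` to `γ ↦ x·(γ•y)`. -/
noncomputable def galoisMap :
    B ⊗[fixedSubalgebra K Γ B] B →ₗ[fixedSubalgebra K Γ B] (Γ → B) :=
  TensorProduct.lift (galoisBilinear K Γ B)

theorem natCast_card_ne_zero_of_isPrimitiveRoot {G R : Type*} [CommGroup G] [Finite G]
    [CommRing R] [IsDomain R] {ζ : R} (hζ : IsPrimitiveRoot ζ (Monoid.exponent G)) :
    (Nat.card G : R) ≠ 0 := by
  have : NeZero (Monoid.exponent G) := ⟨Monoid.exponent_ne_zero_of_finite⟩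
  have hexp : (Monoid.exponent G : R) ≠ 0 := hζ.neZero'.out
  intro hcard
  have hdvd := Nat.cast_dvd_cast (α := R) (card_dvd_exponent_pow_rank G)
  rw [hcard, zero_dvd_iff, Nat.cast_pow] at hdvd
  exact pow_ne_zero _ hexp hdvd

section CharComponent

variable {K Γ B}

omit [Fintype Γ] in
theorem mul_mem_charComponent_mul {χ ψ : Γ →* Kˣ} {x y : B}
    (hx : x ∈ charComponent K Γ B χ) (hy : y ∈ charComponent K Γ B ψ) :
    x * y ∈ charComponent K Γ B (χ * ψ) := fun γ => by
  rw [smul_mul', hx γ, hy γ, MonoidHom.mul_apply, Units.val_mul, mul_smul,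
    smul_mul_assoc, mul_smul_comm]

omit [Fintype Γ] in
theorem charComponent_mul_le (χ ψ : Γ →* Kˣ) :
    charComponent K Γ B χ * charComponent K Γ B ψ ≤ charComponent K Γ B (χ * ψ) :=
  Submodule.mul_le.2 fun _ hx _ hy => mul_mem_charComponent_mul hx hy

omit [Fintype Γ] in
theorem charComponent_one : charComponent K Γ B 1 = 1 := by
  ext b
  rw [Submodule.one_eq_range]
  constructor
  · intro hb
    exact ⟨⟨b, fun γ => by simpa using hb γ⟩, rfl⟩
  · rintro ⟨a, rfl⟩ γ
    simpa using a.2 γ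

omit [Fintype Γ] in
theorem charComponent_mul_inv_eq_one {χ : Γ →* Kˣ}
    (h : (1 : B) ∈ charComponent K Γ B χ * charComponent K Γ B χ⁻¹) :
    charComponent K Γ B χ * charComponent K Γ B χ⁻¹ = 1 := by
  refine le_antisymm ?_ (Submodule.one_le.2 h)
  rw [← charComponent_one, ← mul_inv_cancel χ]
  exact charComponent_mul_le χ χ⁻¹

omit [Fintype Γ] in
theorem charComponent_mul_eq (h : ∀ φ : Γ →* Kˣ,
      charComponent K Γ B φ * charComponent K Γ B φ⁻¹ = 1) (χ ψ : Γ →* Kˣ) :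
    charComponent K Γ B χ * charComponent K Γ B ψ = charComponent K Γ B (χ * ψ) := by
  refine le_antisymm (charComponent_mul_le χ ψ) ?_
  calc charComponent K Γ B (χ * ψ)
      = charComponent K Γ B (χ * ψ) * charComponent K Γ B ψ⁻¹ * charComponent K Γ B ψ := by
        rw [mul_assoc, mul_comm (charComponent K Γ B ψ⁻¹), h, mul_one]
    _ ≤ charComponent K Γ B χ * charComponent K Γ B ψ := by
        grw [charComponent_mul_le (χ * ψ), mul_inv_cancel_right χ ψ]

noncomputable def twistedTrace (χ : Γ →* Kˣ) (b : B) : B := ∑ γ : Γ, (χ γ⁻¹ : K) • γ • b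

theorem twistedTrace_mem (χ : Γ →* Kˣ) (b : B) :
    twistedTrace χ b ∈ charComponent K Γ B χ := fun δ => by
  simp only [twistedTrace, Finset.smul_sum]
  refine Fintype.sum_equiv (Equiv.mulLeft δ) _ _ fun γ => ?_
  rw [smul_comm, smul_smul, Equiv.coe_mulLeft, ← mul_smul]
  congr 1
  simp only [mul_inv_rev, map_mul, map_inv, Units.val_mul, Units.val_inv_eq_inv_val]
  field_simp

omit [Fintype Γ] in
theorem galoisMap_tmul (x y : B) (γ : Γ) : galoisMap K Γ B (x ⊗ₜ y) γ = x * γ • y := rfl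

omit [Fintype Γ] in
theorem exists_sum_smul_mul_smul_eq_ite [DecidableEq Γ]
    (hsurj : Function.Surjective (galoisMap K Γ B)) :
    ∃ s : Finset (B × B), ∀ γ δ : Γ,
      ∑ p ∈ s, γ • p.1 * δ • p.2 = if γ = δ then 1 else 0 := by
  obtain ⟨t, ht⟩ := hsurj (Pi.single 1 1)
  obtain ⟨s, rfl⟩ := TensorProduct.exists_finset t
  refine ⟨s, fun γ δ => ?_⟩
  have h := congr_arg (γ • ·) (congr_fun ht (γ⁻¹ * δ))
  simpa [map_sum, galoisMap_tmul, Finset.smul_sum, smul_mul', smul_smul, Pi.single_apply,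
    inv_mul_eq_one] using h

omit [SMulCommClass Γ K B] in
theorem sum_twistedTrace_mul_twistedTrace [DecidableEq Γ] {s : Finset (B × B)}
    (hs : ∀ γ δ : Γ, ∑ p ∈ s, γ • p.1 * δ • p.2 = if γ = δ then 1 else 0) (χ : Γ →* Kˣ) :
    ∑ p ∈ s, twistedTrace χ p.1 * twistedTrace χ⁻¹ p.2 = (Fintype.card Γ : K) • 1 := by
  calc ∑ p ∈ s, twistedTrace χ p.1 * twistedTrace χ⁻¹ p.2
      = ∑ γ : Γ, ∑ δ : Γ, ((χ γ⁻¹ : K) * (χ⁻¹ δ⁻¹ : K)) • ∑ p ∈ s, γ • p.1 * δ • p.2 := by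
        simp_rw [twistedTrace, Finset.sum_mul_sum, smul_mul_smul_comm, Finset.smul_sum]
        rw [Finset.sum_comm]
        exact Finset.sum_congr rfl fun _ _ => Finset.sum_comm
    _ = ∑ γ : Γ, (1 : K) • (1 : B) := by
        simp [hs]
    _ = (Fintype.card Γ : K) • 1 := by
        rw [Finset.sum_const, Finset.card_univ, one_smul, Nat.cast_smul_eq_nsmul]

theorem one_mem_charComponent_mul_inv (hsurj : Function.Surjective (galoisMap K Γ B))
    (hcard : (Nat.card Γ : K) ≠ 0) (χ : Γ →* Kˣ) :
    (1 : B) ∈ charComponent K Γ B χ * charComponent K Γ B χ⁻¹ := by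
  classical
  obtain ⟨s, hs⟩ := exists_sum_smul_mul_smul_eq_ite hsurj
  have hmem :
      (Fintype.card Γ : K) • (1 : B) ∈ charComponent K Γ B χ * charComponent K Γ B χ⁻¹ :=
    sum_twistedTrace_mul_twistedTrace hs χ ▸ Submodule.sum_mem _ fun p _ =>
      Submodule.mul_mem_mul (twistedTrace_mem χ p.1) (twistedTrace_mem χ⁻¹ p.2)
  rw [Nat.card_eq_fintype_card] at hcard
  simpa [smul_smul, inv_mul_cancel₀ hcard] using
    Submodule.smul_of_tower_mem _ (Fintype.card Γ : K)⁻¹ hmem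

end CharComponent

theorem stmt19
    (e : ℕ) (he : Monoid.exponent Γ = e) (ζ : K) (hζ : IsPrimitiveRoot ζ e)
    (hGalois : Function.Bijective (galoisMap K Γ B)) :
    ∀ χ ψ : Γ →* Kˣ,
      charComponent K Γ B χ * charComponent K Γ B ψ = charComponent K Γ B (χ * ψ) ∧
      (∃ E : (charComponent K Γ B χ ⊗[fixedSubalgebra K Γ B] charComponent K Γ B ψ)
          ≃ₗ[fixedSubalgebra K Γ B] charComponent K Γ B (χ * ψ),
        ∀ (x : charComponent K Γ B χ) (y : charComponent K Γ B ψ),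
          (E (x ⊗ₜ y) : B) = (x : B) * (y : B)) ∧
      Module.Finite (fixedSubalgebra K Γ B) (charComponent K Γ B χ) ∧
      Module.Projective (fixedSubalgebra K Γ B) (charComponent K Γ B χ) ∧
      charComponent K Γ B χ * charComponent K Γ B χ⁻¹ =
        (1 : Submodule (fixedSubalgebra K Γ B) B) := by
  subst he
  have hinv (φ : Γ →* Kˣ) : charComponent K Γ B φ * charComponent K Γ B φ⁻¹ = 1 :=
    charComponent_mul_inv_eq_one <| one_mem_charComponent_mul_inv hGalois.2
      (natCast_card_ne_zero_of_isPrimitiveRoot hζ) φ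
  intro χ ψ
  have hχ : IsUnit (charComponent K Γ B χ) := .of_mul_eq_one _ (hinv χ)
  refine ⟨charComponent_mul_eq hinv χ ψ, ⟨Submodule.tensorEquivMul
      (.mkOfMulEqOne _ _ (hinv χ)) (.mkOfMulEqOne _ _ (hinv ψ)) ≪≫ₗ
      LinearEquiv.ofEq _ _ (charComponent_mul_eq hinv χ ψ), fun x y => rfl⟩,
    Module.Finite.iff_fg.2 (Submodule.fg_of_isUnit hχ), Submodule.projective_of_isUnit hχ,
    hinv χ⟩

end
end
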